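/- Let 𝓘 : Fin m → Finset ℕ be an abstract network, (T,ι) a contraction tree for 𝓘 of rank r and height H, Λ a feasibility assignment on the leaves of T, ε > 0 a real number, and Λ̂ an ε-simulation of Λ on (T,ι). Assume that every tensor in every set Λ̂(u) has all entries of modulus at most 1, that for every node u, every partial simulation λ̂ of Λ rooted at u, and every node u' of T[u], the tensor λ̂(u') has all entries of modulus at most 1, and that ε·(3·d^{2r}+1)^H ≤ 1. Let u₀ be the root of T (so ι(u₀) = ∅ and tensors at u₀ are single complex numbers), let α be the maximum of |g| over g ∈ Λ̂(u₀), and let VAL be the maximum of |λ̂(u₀)| over all partial simulations λ̂ of Λ rooted at u₀. Then |α − VAL| ≤ ε·(3·d^{2r}+1)^H. -/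

import Mathlib

/-!
Write `C = 3 d^(2r) + 1`. By induction over the contraction tree, the set `Λ̂(u)` and the set of
root tensors `λ̂(u)` of partial simulations rooted at `u` are within entrywise distance
`ε C^(height u)` of each other, in both directions. At an internal node the contraction is a sum
of `d^(2|L|) ≤ d^(2r)` products of entries of modulus at most `1`, so the errors `δl, δr` of the
two children cost at most `d^(2r) (δl + δr)`; the simulation step adds `ε`, and
`ε + 2 d^(2r) ε C^h ≤ ε C^(h+1)`. Going from `Λ̂(u)` to partial simulations requires gluing the
partial simulations of the two children, which is possible because their leaves are distinct.
At the root the tensors are numbers, so the two maxima differ by at most `ε C^H`.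
-/

/-- Rooted binary trees in which every internal node has exactly two children,
with leaves labeled by elements of `α`. -/
inductive BTree (α : Type) : Type
  | leaf (a : α) : BTree α
  | node (l r : BTree α) : BTree α

namespace BTree

variable {α : Type}

/-- The list of leaf labels of a binary tree. -/
def leaves : BTree α → List α
  | leaf a => [a]
  | node l r => l.leaves ++ r.leaves

/-- The height of a binary tree: maximum number of edges on a root-to-leaf path. -/
def height : BTree α → ℕ
  | leaf _ => 0
  | node l r => max l.height r.height + 1

/-- The list of all subtrees (i.e. nodes) of a binary tree. -/
def subtrees : BTree α → List (BTree α)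
  | leaf a => [leaf a]
  | node l r => node l r :: (l.subtrees ++ r.subtrees)

end BTree

/-- An abstract network: every index occurring in the family belongs to exactly
two members of the family. -/
def IsAbstractNetwork {m : ℕ} (I : Fin m → Finset ℕ) : Prop :=
  ∀ i : ℕ, (∃ j : Fin m, i ∈ I j) →
    (Finset.univ.filter fun j : Fin m => i ∈ I j).card = 2

/-- The index set `ι(u)` attached to the node `u` of a contraction tree for `I`. -/
def iota {m : ℕ} (I : Fin m → Finset ℕ) : BTree (Fin m) → Finset ℕ
  | .leaf j => I j
  | .node l r => symmDiff (iota I l) (iota I r)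

/-- `(T, ι)` is a contraction tree for the abstract network `I`: the leaves of `T` are
labeled bijectively with the members of the family, and at every internal node the
index sets of the two children intersect. -/
def IsContractionTree {m : ℕ} (I : Fin m → Finset ℕ) (T : BTree (Fin m)) : Prop :=
  T.leaves.Nodup ∧ (∀ j : Fin m, j ∈ T.leaves) ∧
  ∀ l r : BTree (Fin m), BTree.node l r ∈ T.subtrees →
    ((iota I l) ∩ (iota I r)).Nonempty

/-- The rank of the contraction tree `(T, ι)`: the maximum of `|ι(u)|` over nodes `u`. -/
def rankOf {m : ℕ} (I : Fin m → Finset ℕ) (T : BTree (Fin m)) : ℕ :=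
  (T.subtrees.map fun u => (iota I u).card).foldr max 0

/-- A `d`-state tensor, given by its entries on assignments of a pair of values in
`Fin d` to every possible index; a tensor *with index set* `I` is one whose entries
depend only on the values assigned to the indices in `I` (see `HasIndexSet`). -/
abbrev Tensor (d : ℕ) : Type := (ℕ → Fin d × Fin d) → ℂ

/-- `g` is a tensor with index set `I`: its entries depend only on the indices in `I`. -/
def HasIndexSet {d : ℕ} (g : Tensor d) (I : Finset ℕ) : Prop :=
  ∀ σ τ : ℕ → Fin d × Fin d, (∀ x ∈ I, σ x = τ x) → g σ = g τ

/-- The norm of a tensor: the supremum of the moduli of its entries. -/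
noncomputable def tnorm {d : ℕ} (g : Tensor d) : ℝ := ⨆ σ, ‖g σ‖

/-- The contraction of two tensors over the shared index set `L`. -/
noncomputable def contr {d : ℕ} (L : Finset ℕ) (g g' : Tensor d) : Tensor d :=
  fun σ => ∑ τ : ↥L → Fin d × Fin d,
    g (fun x => if h : x ∈ L then τ ⟨x, h⟩ else σ x) *
    g' (fun x => if h : x ∈ L then τ ⟨x, h⟩ else σ x)

/-- A partial simulation of the feasibility assignment `Λ` rooted at the node `u`:
an assignment of a tensor to each node of the subtree `T[u]` that picks a member of
`Λ` at each leaf and is the contraction of the children's tensors (over their shared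
index set) at each internal node. -/
def IsPartialSim {d m : ℕ} (I : Fin m → Finset ℕ) (Λ : Fin m → Finset (Tensor d))
    (u : BTree (Fin m)) (lam : BTree (Fin m) → Tensor d) : Prop :=
  (∀ j : Fin m, BTree.leaf j ∈ u.subtrees → lam (BTree.leaf j) ∈ Λ j) ∧
  (∀ l r : BTree (Fin m), BTree.node l r ∈ u.subtrees →
    lam (BTree.node l r) = contr ((iota I l) ∩ (iota I r)) (lam l) (lam r))

/-- An `ε`-simulation of the feasibility assignment `Λ` on the contraction tree `T`:
each node carries a finite set of tensors, agreeing with `Λ` at the leaves; at every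
internal node, every tensor of the node is `ε`-close to the contraction of some pair
of tensors of the children, and conversely the contraction of every pair of tensors
of the children is `ε`-close to some tensor of the node. -/
def IsEpsSim {d m : ℕ} (I : Fin m → Finset ℕ) (Λ : Fin m → Finset (Tensor d))
    (T : BTree (Fin m)) (ε : ℝ) (L : BTree (Fin m) → Finset (Tensor d)) : Prop :=
  (∀ j : Fin m, BTree.leaf j ∈ T.subtrees → L (BTree.leaf j) = Λ j) ∧
  (∀ l r : BTree (Fin m), BTree.node l r ∈ T.subtrees →
    (∀ g ∈ L (BTree.node l r), ∃ gl ∈ L l, ∃ gr ∈ L r,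
        tnorm (g - contr ((iota I l) ∩ (iota I r)) gl gr) ≤ ε) ∧
    (∀ gl ∈ L l, ∀ gr ∈ L r, ∃ g ∈ L (BTree.node l r),
        tnorm (g - contr ((iota I l) ∩ (iota I r)) gl gr) ≤ ε))

namespace BTree

variable {α : Type} {t u v : BTree α} {l r : BTree α}

@[simp]
theorem mem_subtrees_node :
    u ∈ (node l r).subtrees ↔ u = node l r ∨ u ∈ l.subtrees ∨ u ∈ r.subtrees := by
  simp [subtrees]

theorem mem_subtrees_self (t : BTree α) : t ∈ t.subtrees := by
  cases t <;> simp [subtrees]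

theorem mem_subtrees_trans (huv : u ∈ v.subtrees) (hvt : v ∈ t.subtrees) : u ∈ t.subtrees := by
  induction t with
  | leaf a =>
    simp only [subtrees, List.mem_singleton] at hvt
    exact hvt ▸ huv
  | node l r ihl ihr =>
    rcases mem_subtrees_node.1 hvt with rfl | hv | hv
    · exact huv
    · exact mem_subtrees_node.2 (.inr (.inl (ihl hv)))
    · exact mem_subtrees_node.2 (.inr (.inr (ihr hv)))

theorem left_mem_subtrees_node : l ∈ (node l r).subtrees :=
  mem_subtrees_node.2 (.inr (.inl l.mem_subtrees_self))

theorem right_mem_subtrees_node : r ∈ (node l r).subtrees :=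
  mem_subtrees_node.2 (.inr (.inr r.mem_subtrees_self))

theorem height_le_of_mem_subtrees (h : u ∈ t.subtrees) : u.height ≤ t.height := by
  induction t with
  | leaf a =>
    simp only [subtrees, List.mem_singleton] at h
    exact h ▸ le_rfl
  | node l r ihl ihr =>
    simp only [height]
    rcases mem_subtrees_node.1 h with rfl | hu | hu
    · rfl
    · exact (ihl hu).trans (by omega)
    · exact (ihr hu).trans (by omega)

theorem node_notMem_subtrees_left : node l r ∉ l.subtrees := fun h => by
  have := height_le_of_mem_subtrees h
  simp only [height] at this
  omega

theorem node_notMem_subtrees_right : node l r ∉ r.subtrees := fun h => by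
  have := height_le_of_mem_subtrees h
  simp only [height] at this
  omega

theorem leaves_sublist_of_mem_subtrees (h : u ∈ t.subtrees) : u.leaves.Sublist t.leaves := by
  induction t with
  | leaf a =>
    simp only [subtrees, List.mem_singleton] at h
    exact h ▸ List.Sublist.refl _
  | node l r ihl ihr =>
    rcases mem_subtrees_node.1 h with rfl | hu | hu
    · exact List.Sublist.refl _
    · exact (ihl hu).trans (List.sublist_append_left _ _)
    · exact (ihr hu).trans (List.sublist_append_right _ _)

theorem leaves_ne_nil (t : BTree α) : t.leaves ≠ [] := by
  induction t with
  | leaf a => simp [leaves]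
  | node l r ihl _ => simp [leaves, ihl]

theorem notMem_subtrees_right_of_nodup (hnd : (node l r).leaves.Nodup) (hl : u ∈ l.subtrees) :
    u ∉ r.subtrees := fun hr => by
  obtain ⟨j, hj⟩ := List.exists_mem_of_ne_nil _ u.leaves_ne_nil
  exact List.disjoint_of_nodup_append hnd ((leaves_sublist_of_mem_subtrees hl).subset hj)
    ((leaves_sublist_of_mem_subtrees hr).subset hj)

end BTree

open BTree

theorem card_iota_le_rankOf {m : ℕ} {I : Fin m → Finset ℕ} {T u : BTree (Fin m)}
    (hu : u ∈ T.subtrees) : (iota I u).card ≤ rankOf I T :=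
  List.le_max_of_le (List.mem_map_of_mem hu) le_rfl

section PartialSim

variable {d m : ℕ} {I : Fin m → Finset ℕ} {Λ : Fin m → Finset (Tensor d)}
  {lam lam' : BTree (Fin m) → Tensor d}

theorem isPartialSim_leaf {j : Fin m} : IsPartialSim I Λ (leaf j) lam ↔ lam (leaf j) ∈ Λ j := by
  simp [IsPartialSim, subtrees]

theorem isPartialSim_node {a b : BTree (Fin m)} :
    IsPartialSim I Λ (node a b) lam ↔
      lam (node a b) = contr (iota I a ∩ iota I b) (lam a) (lam b) ∧
        IsPartialSim I Λ a lam ∧ IsPartialSim I Λ b lam := by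
  simp only [IsPartialSim, mem_subtrees_node, reduceCtorEq, false_or, node.injEq]
  constructor
  · rintro ⟨hleaf, hnode⟩
    exact ⟨hnode a b (.inl ⟨rfl, rfl⟩), ⟨fun j hj => hleaf j (.inl hj),
      fun x y h => hnode x y (.inr (.inl h))⟩, fun j hj => hleaf j (.inr hj),
      fun x y h => hnode x y (.inr (.inr h))⟩
  · rintro ⟨hroot, ⟨hal, han⟩, hbl, hbn⟩
    refine ⟨fun j => Or.rec (hal j) (hbl j), fun x y => ?_⟩
    rintro (⟨rfl, rfl⟩ | h | h)
    exacts [hroot, han x y h, hbn x y h]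

theorem IsPartialSim.congr {u : BTree (Fin m)} (h : IsPartialSim I Λ u lam)
    (heq : ∀ v ∈ u.subtrees, lam' v = lam v) : IsPartialSim I Λ u lam' := by
  refine ⟨fun j hj => heq _ hj ▸ h.1 j hj, fun x y hxy => ?_⟩
  rw [heq _ hxy, heq x (mem_subtrees_trans left_mem_subtrees_node hxy),
    heq y (mem_subtrees_trans right_mem_subtrees_node hxy)]
  exact h.2 x y hxy

theorem IsPartialSim.glue {a b : BTree (Fin m)} (hnd : (node a b).leaves.Nodup)
    (ha : IsPartialSim I Λ a lam) (hb : IsPartialSim I Λ b lam') :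
    ∃ μ, IsPartialSim I Λ (node a b) μ ∧ μ a = lam a ∧ μ b = lam' b := by
  classical
  -- no node lies in both subtrees, since they have no leaf in common
  let μ : BTree (Fin m) → Tensor d := fun v =>
    if v ∈ a.subtrees then lam v
    else if v ∈ b.subtrees then lam' v
    else contr (iota I a ∩ iota I b) (lam a) (lam' b)
  have hμa : ∀ v ∈ a.subtrees, μ v = lam v := fun v hv => if_pos hv
  have hμb : ∀ v ∈ b.subtrees, μ v = lam' v := fun v hv =>
    (if_neg fun hva => notMem_subtrees_right_of_nodup hnd hva hv).trans (if_pos hv)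
  have hμab : μ (node a b) = contr (iota I a ∩ iota I b) (lam a) (lam' b) :=
    (if_neg node_notMem_subtrees_left).trans (if_neg node_notMem_subtrees_right)
  have hμa' := hμa a a.mem_subtrees_self
  have hμb' := hμb b b.mem_subtrees_self
  refine ⟨μ, isPartialSim_node.2 ⟨?_, ha.congr hμa, hb.congr hμb⟩, hμa', hμb'⟩
  rw [hμab, hμa', hμb']

end PartialSim

section Tensor

variable {d : ℕ}

theorem norm_mul_sub_mul_le {R : Type*} [SeminormedRing R] {a b c e : R} {δ δ' : ℝ}
    (ha : ‖a‖ ≤ 1) (he : ‖e‖ ≤ 1) (hac : ‖a - c‖ ≤ δ) (hbe : ‖b - e‖ ≤ δ') (hδ : 0 ≤ δ) :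
    ‖a * b - c * e‖ ≤ δ + δ' := by
  calc ‖a * b - c * e‖ = ‖a * (b - e) + (a - c) * e‖ := by congr 1; noncomm_ring
    _ ≤ ‖a‖ * ‖b - e‖ + ‖a - c‖ * ‖e‖ :=
      (norm_add_le _ _).trans (add_le_add (norm_mul_le _ _) (norm_mul_le _ _))
    _ ≤ 1 * δ' + δ * 1 := by gcongr
    _ = δ + δ' := by ring

theorem card_assignments (L : Finset ℕ) : Fintype.card (↥L → Fin d × Fin d) = d ^ (2 * L.card) := by
  classical
  rw [Fintype.card_fun, Fintype.card_prod, Fintype.card_fin, Fintype.card_coe, pow_mul, sq]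

theorem norm_contr_sub_contr_le (L : Finset ℕ) {gl gr fl fr : Tensor d} {δl δr : ℝ}
    (hgl : ∀ σ, ‖gl σ‖ ≤ 1) (hfr : ∀ σ, ‖fr σ‖ ≤ 1) (hl : ∀ σ, ‖gl σ - fl σ‖ ≤ δl)
    (hr : ∀ σ, ‖gr σ - fr σ‖ ≤ δr) (hδl : 0 ≤ δl) (σ : ℕ → Fin d × Fin d) :
    ‖contr L gl gr σ - contr L fl fr σ‖ ≤ d ^ (2 * L.card) * (δl + δr) := by
  rw [contr, contr, ← Finset.sum_sub_distrib]
  refine (norm_sum_le_of_le _ fun τ _ =>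
    norm_mul_sub_mul_le (hgl _) (hfr _) (hl _) (hr _) hδl).trans_eq ?_
  rw [Finset.sum_const, Finset.card_univ, card_assignments, nsmul_eq_mul]
  push_cast
  rfl

theorem norm_contr_le (L : Finset ℕ) {g g' : Tensor d} (hg : ∀ σ, ‖g σ‖ ≤ 1)
    (hg' : ∀ σ, ‖g' σ‖ ≤ 1) (σ : ℕ → Fin d × Fin d) :
    ‖contr L g g' σ‖ ≤ d ^ (2 * L.card) := by
  refine (norm_sum_le_of_le (n := fun _ => 1) _ fun τ _ =>
    (norm_mul_le _ _).trans (mul_le_one₀ (hg _) (norm_nonneg _) (hg' _))).trans_eq ?_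
  rw [Finset.sum_const, Finset.card_univ, card_assignments, nsmul_eq_mul, mul_one]
  push_cast
  rfl

theorem norm_apply_le_tnorm {g : Tensor d} {B : ℝ} (hg : ∀ σ, ‖g σ‖ ≤ B) (σ : ℕ → Fin d × Fin d) :
    ‖g σ‖ ≤ tnorm g :=
  le_ciSup ⟨B, Set.forall_mem_range.2 hg⟩ σ

theorem tnorm_le_tnorm_add [NeZero d] {g h : Tensor d} {B E : ℝ} (hh : ∀ σ, ‖h σ‖ ≤ B)
    (hgh : ∀ σ, ‖g σ - h σ‖ ≤ E) : tnorm g ≤ tnorm h + E :=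
  ciSup_le fun σ => (norm_le_norm_add_norm_sub' (g σ) (h σ)).trans
    (add_le_add (norm_apply_le_tnorm hh σ) (hgh σ))

theorem norm_sub_contr_le (L : Finset ℕ) {g gl gr fl fr : Tensor d} {ε δl δr : ℝ}
    (hg : ∀ σ, ‖g σ‖ ≤ 1) (hgl : ∀ σ, ‖gl σ‖ ≤ 1) (hgr : ∀ σ, ‖gr σ‖ ≤ 1)
    (hfr : ∀ σ, ‖fr σ‖ ≤ 1) (hε : tnorm (g - contr L gl gr) ≤ ε)
    (hl : ∀ σ, ‖gl σ - fl σ‖ ≤ δl) (hr : ∀ σ, ‖gr σ - fr σ‖ ≤ δr) (hδl : 0 ≤ δl)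
    (σ : ℕ → Fin d × Fin d) :
    ‖g σ - contr L fl fr σ‖ ≤ ε + d ^ (2 * L.card) * (δl + δr) := by
  have hbdd : ∀ σ, ‖(g - contr L gl gr) σ‖ ≤ 1 + d ^ (2 * L.card) := fun σ =>
    (norm_sub_le _ _).trans (add_le_add (hg σ) (norm_contr_le L hgl hgr σ))
  calc ‖g σ - contr L fl fr σ‖
      ≤ ‖(g - contr L gl gr) σ‖ + ‖contr L gl gr σ - contr L fl fr σ‖ :=
        norm_sub_le_norm_sub_add_norm_sub _ _ _
    _ ≤ ε + d ^ (2 * L.card) * (δl + δr) :=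
        add_le_add ((norm_apply_le_tnorm hbdd σ).trans hε)
          (norm_contr_sub_contr_le L hgl hfr hl hr hδl σ)

end Tensor

theorem add_mul_add_le_pow_succ {ε D : ℝ} (hε : 0 ≤ ε) (hD : 0 ≤ D) (a b : ℕ) :
    ε + D * (ε * (3 * D + 1) ^ a + ε * (3 * D + 1) ^ b) ≤ ε * (3 * D + 1) ^ (max a b + 1) := by
  set C := 3 * D + 1
  have hC : 1 ≤ C := by linarith
  have hCa : ε * C ^ a ≤ ε * C ^ max a b :=
    mul_le_mul_of_nonneg_left (pow_le_pow_right₀ hC (le_max_left a b)) hε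
  have hCb : ε * C ^ b ≤ ε * C ^ max a b :=
    mul_le_mul_of_nonneg_left (pow_le_pow_right₀ hC (le_max_right a b)) hε
  have hC1 : ε ≤ ε * C ^ max a b := le_mul_of_one_le_right hε (one_le_pow₀ hC)
  calc ε + D * (ε * C ^ a + ε * C ^ b) ≤ ε * C ^ max a b + D * (2 * (ε * C ^ max a b)) := by
        gcongr; linarith
    _ ≤ ε * C ^ max a b * C := by nlinarith
    _ = ε * C ^ (max a b + 1) := by ring

section Approx

variable {d m : ℕ} {I : Fin m → Finset ℕ} {Λ : Fin m → Finset (Tensor d)}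
  {L : BTree (Fin m) → Finset (Tensor d)} {T : BTree (Fin m)} {ε : ℝ}

def IsApproxAt (I : Fin m → Finset ℕ) (Λ : Fin m → Finset (Tensor d))
    (L : BTree (Fin m) → Finset (Tensor d)) (u : BTree (Fin m)) (δ : ℝ) : Prop :=
  (∀ g ∈ L u, ∃ lam, IsPartialSim I Λ u lam ∧ ∀ σ, ‖g σ - lam u σ‖ ≤ δ) ∧
    ∀ lam, IsPartialSim I Λ u lam → ∃ g ∈ L u, ∀ σ, ‖g σ - lam u σ‖ ≤ δ

theorem IsApproxAt.mono {u : BTree (Fin m)} {δ δ' : ℝ} (h : IsApproxAt I Λ L u δ)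
    (hδ : δ ≤ δ') : IsApproxAt I Λ L u δ' :=
  ⟨fun g hg => (h.1 g hg).imp fun _ hlam => ⟨hlam.1, fun σ => (hlam.2 σ).trans hδ⟩,
    fun lam hlam => (h.2 lam hlam).imp fun _ hg => ⟨hg.1, fun σ => (hg.2 σ).trans hδ⟩⟩

theorem isApproxAt_leaf (hsim : IsEpsSim I Λ T ε L) {j : Fin m} (hj : leaf j ∈ T.subtrees)
    {δ : ℝ} (hδ : 0 ≤ δ) : IsApproxAt I Λ L (leaf j) δ := by
  have hL := hsim.1 j hj
  refine ⟨fun g hg => ⟨fun _ => g, isPartialSim_leaf.2 (hL ▸ hg), fun σ => ?_⟩,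
    fun lam hlam => ⟨lam (leaf j), hL ▸ isPartialSim_leaf.1 hlam, fun σ => ?_⟩⟩ <;>
  simpa using hδ

theorem IsApproxAt.node (hsim : IsEpsSim I Λ T ε L)
    (hb1 : ∀ u ∈ T.subtrees, ∀ g ∈ L u, ∀ σ, ‖g σ‖ ≤ 1)
    (hb2 : ∀ u ∈ T.subtrees, ∀ lam : BTree (Fin m) → Tensor d,
      IsPartialSim I Λ u lam → ∀ u2 ∈ u.subtrees, ∀ σ, ‖lam u2 σ‖ ≤ 1)
    {a b : BTree (Fin m)} (hu : node a b ∈ T.subtrees) (hnd : (node a b).leaves.Nodup)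
    {δa δb : ℝ} (ha : IsApproxAt I Λ L a δa) (hb : IsApproxAt I Λ L b δb) (hδa : 0 ≤ δa) :
    IsApproxAt I Λ L (node a b) (ε + d ^ (2 * (iota I a ∩ iota I b).card) * (δa + δb)) := by
  have haT := mem_subtrees_trans left_mem_subtrees_node hu
  have hbT := mem_subtrees_trans right_mem_subtrees_node hu
  have hroot_b : ∀ lam, IsPartialSim I Λ b lam → ∀ σ, ‖lam b σ‖ ≤ 1 :=
    fun lam hlam => hb2 b hbT lam hlam b b.mem_subtrees_self
  constructor
  · intro g hg
    obtain ⟨gl, hgl, gr, hgr, hε⟩ := (hsim.2 a b hu).1 g hg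
    obtain ⟨lamA, hlamA, hA⟩ := ha.1 gl hgl
    obtain ⟨lamB, hlamB, hB⟩ := hb.1 gr hgr
    obtain ⟨μ, hμ, hμa, hμb⟩ := hlamA.glue hnd hlamB
    refine ⟨μ, hμ, fun σ => ?_⟩
    rw [(isPartialSim_node.1 hμ).1, hμa, hμb]
    exact norm_sub_contr_le _ (hb1 _ hu g hg) (hb1 a haT gl hgl) (hb1 b hbT gr hgr)
      (hroot_b lamB hlamB) hε hA hB hδa σ
  · intro lam hlam
    obtain ⟨hroot, hlamA, hlamB⟩ := isPartialSim_node.1 hlam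
    obtain ⟨gl, hgl, hA⟩ := ha.2 lam hlamA
    obtain ⟨gr, hgr, hB⟩ := hb.2 lam hlamB
    obtain ⟨g, hg, hε⟩ := (hsim.2 a b hu).2 gl hgl gr hgr
    refine ⟨g, hg, fun σ => ?_⟩
    rw [hroot]
    exact norm_sub_contr_le _ (hb1 _ hu g hg) (hb1 a haT gl hgl) (hb1 b hbT gr hgr)
      (hroot_b lam hlamB) hε hA hB hδa σ

theorem isApproxAt_of_isEpsSim (hd : 1 ≤ d) (hTn : T.leaves.Nodup) (hε : 0 ≤ ε)
    (hsim : IsEpsSim I Λ T ε L)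
    (hb1 : ∀ u ∈ T.subtrees, ∀ g ∈ L u, ∀ σ, ‖g σ‖ ≤ 1)
    (hb2 : ∀ u ∈ T.subtrees, ∀ lam : BTree (Fin m) → Tensor d,
      IsPartialSim I Λ u lam → ∀ u2 ∈ u.subtrees, ∀ σ, ‖lam u2 σ‖ ≤ 1) :
    ∀ u ∈ T.subtrees,
      IsApproxAt I Λ L u (ε * (3 * (d : ℝ) ^ (2 * rankOf I T) + 1) ^ u.height) := by
  intro u
  induction u with
  | leaf j => exact fun hu => isApproxAt_leaf hsim hu (by positivity)
  | node a b iha ihb =>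
    intro hu
    have haT := mem_subtrees_trans left_mem_subtrees_node hu
    have hbT := mem_subtrees_trans right_mem_subtrees_node hu
    have hcard : (iota I a ∩ iota I b).card ≤ rankOf I T :=
      (Finset.card_le_card Finset.inter_subset_left).trans (card_iota_le_rankOf haT)
    refine ((iha haT).node hsim hb1 hb2 hu (hTn.sublist (leaves_sublist_of_mem_subtrees hu))
      (ihb hbT) (by positivity)).mono ?_
    calc _ ≤ ε + (d : ℝ) ^ (2 * rankOf I T) *
          (ε * (3 * (d : ℝ) ^ (2 * rankOf I T) + 1) ^ a.height +
            ε * (3 * (d : ℝ) ^ (2 * rankOf I T) + 1) ^ b.height) := by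
          gcongr
          exact_mod_cast hd
      _ ≤ _ := add_mul_add_le_pow_succ hε (by positivity) _ _

end Approx

theorem statement_13_general
    (d m : ℕ) (hd : 1 ≤ d)
    (I : Fin m → Finset ℕ)
    (T : BTree (Fin m)) (hT : IsContractionTree I T)
    (r H : ℕ) (hrank : rankOf I T = r) (hheight : T.height = H)
    (Λ : Fin m → Finset (Tensor d))
    (ε : ℝ) (hε : 0 < ε)
    (L : BTree (Fin m) → Finset (Tensor d)) (hsim : IsEpsSim I Λ T ε L)
    (hb1 : ∀ u ∈ T.subtrees, ∀ g ∈ L u, ∀ σ, ‖g σ‖ ≤ 1)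
    (hb2 : ∀ u ∈ T.subtrees, ∀ lam : BTree (Fin m) → Tensor d,
      IsPartialSim I Λ u lam → ∀ u2 ∈ u.subtrees, ∀ σ, ‖lam u2 σ‖ ≤ 1)
    (α VAL : ℝ)
    (hα : IsGreatest {x : ℝ | ∃ g ∈ L T, x = tnorm g} α)
    (hVAL : IsGreatest {x : ℝ | ∃ lam : BTree (Fin m) → Tensor d,
        IsPartialSim I Λ T lam ∧ x = tnorm (lam T)} VAL) :
    |α - VAL| ≤ ε * (3 * (d : ℝ) ^ (2 * r) + 1) ^ H := by
  have : NeZero d := ⟨by omega⟩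
  obtain ⟨⟨g₀, hg₀, rfl⟩, hα_max⟩ := hα
  obtain ⟨⟨lam₀, hlam₀, rfl⟩, hVAL_max⟩ := hVAL
  subst hrank hheight
  have hTT := T.mem_subtrees_self
  obtain ⟨hL_sim, hsim_L⟩ := isApproxAt_of_isEpsSim hd hT.1 hε.le hsim hb1 hb2 T hTT
  obtain ⟨lam, hlam, hclose⟩ := hL_sim g₀ hg₀
  obtain ⟨g, hg, hclose'⟩ := hsim_L lam₀ hlam₀
  have hle := tnorm_le_tnorm_add (hb2 T hTT lam hlam T hTT) hclose
  have hge := tnorm_le_tnorm_add (hb1 T hTT g hg) fun σ => (norm_sub_rev _ _).trans_le (hclose' σ)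
  have hVAL_ge := hVAL_max ⟨lam, hlam, rfl⟩
  have hα_ge := hα_max ⟨g, hg, rfl⟩
  rw [abs_sub_le_iff]
  constructor <;> linarith

/-- Under the stated boundedness assumptions, if `α` is the largest
modulus of a (rank-0) tensor in the `ε`-simulation at the root of the contraction tree,
and `VAL` is the largest modulus of the root tensor over all partial simulations of
`Λ` rooted at the root, then `|α − VAL| ≤ ε·(3d^(2r)+1)^H`. -/
theorem statement_13
    (d m : ℕ) (hd : 1 ≤ d)
    (I : Fin m → Finset ℕ) (hnet : IsAbstractNetwork I)
    (T : BTree (Fin m)) (hT : IsContractionTree I T)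
    (r H : ℕ) (hrank : rankOf I T = r) (hheight : T.height = H)
    (Λ : Fin m → Finset (Tensor d))
    (hΛ : ∀ j : Fin m, (Λ j).Nonempty ∧ ∀ g ∈ Λ j, HasIndexSet g (I j))
    (ε : ℝ) (hε : 0 < ε)
    (L : BTree (Fin m) → Finset (Tensor d)) (hsim : IsEpsSim I Λ T ε L)
    (hidx : ∀ u ∈ T.subtrees, ∀ g ∈ L u, HasIndexSet g (iota I u))
    (hb1 : ∀ u ∈ T.subtrees, ∀ g ∈ L u, ∀ σ, ‖g σ‖ ≤ 1)
    (hb2 : ∀ u ∈ T.subtrees, ∀ lam : BTree (Fin m) → Tensor d,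
      IsPartialSim I Λ u lam → ∀ u2 ∈ u.subtrees, ∀ σ, ‖lam u2 σ‖ ≤ 1)
    (hsmall : ε * (3 * (d : ℝ) ^ (2 * r) + 1) ^ H ≤ 1)
    (hroot : iota I T = ∅)
    (α VAL : ℝ)
    (hα : IsGreatest {x : ℝ | ∃ g ∈ L T, x = tnorm g} α)
    (hVAL : IsGreatest {x : ℝ | ∃ lam : BTree (Fin m) → Tensor d,
        IsPartialSim I Λ T lam ∧ x = tnorm (lam T)} VAL) :
    |α - VAL| ≤ ε * (3 * (d : ℝ) ^ (2 * r) + 1) ^ H :=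
  statement_13_general d m hd I T hT r H hrank hheight Λ ε hε L hsim hb1 hb2 α VAL hα hVAL
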